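/- For a surjective fibration p : E → B, secat_m(p) ≤ cat_m(B); in particular, if B is r-connected then secat_m(p) = 0 for all m ≤ r. If in addition E is contractible, then secat_m(p) = cat_m(B). -/

import Mathlib

universe u

namespace RelativeCWComplexOld

/-- The `n`-dimensional sphere (in `ℝⁿ⁺¹`), as in the older Mathlib. -/
noncomputable def sphere (n : ℤ) : TopCat.{u} :=
  TopCat.of <| ULift <| Metric.sphere (0 : EuclideanSpace ℝ <| Fin <| Int.toNat <| n + 1) 1

/-- The `n`-dimensional closed disk, as in the older Mathlib. -/
noncomputable def disk (n : ℤ) : TopCat.{u} :=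
  TopCat.of <| ULift <| Metric.closedBall (0 : EuclideanSpace ℝ <| Fin <| Int.toNat n) 1

/-- The inclusion map from the `n`-sphere to the `(n+1)`-disk. -/
noncomputable def sphereInclusion (n : ℤ) : sphere.{u} n ⟶ disk.{u} (n + 1) :=
  TopCat.ofHom ⟨fun x => ⟨⟨x.down.1, Metric.mem_closedBall.2 (le_of_eq (Metric.mem_sphere.1 x.down.2))⟩⟩,
    continuous_uliftUp.comp (Continuous.subtype_mk (continuous_subtype_val.comp continuous_uliftDown) _)⟩

/-- Attaching generalized cells, as in the older Mathlib. -/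
structure AttachGeneralizedCells {S D : TopCat.{u}} (f : S ⟶ D) (X X' : TopCat.{u}) where
  cells : Type u
  attachMaps : cells → (S ⟶ X)
  iso_pushout : X' ≅ CategoryTheory.Limits.pushout (CategoryTheory.Limits.Sigma.desc attachMaps)
    (CategoryTheory.Limits.Sigma.map fun (_ : cells) => f)

/-- Attaching `n`-cells, as in the older Mathlib. -/
def AttachCells (n : ℤ) := AttachGeneralizedCells (sphereInclusion.{u} n)

end RelativeCWComplexOld

/-- Relative CW complex, as in the older Mathlib (`sk (n+1)` is `sk n` with `n`-cells attached). -/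
structure RelativeCWComplexOld (A : TopCat.{u}) where
  sk : ℕ → TopCat.{u}
  isoSkZero : A ≅ sk 0
  attachCells (n : ℕ) : RelativeCWComplexOld.AttachCells ((n : ℤ) - 1) (sk n) (sk (n + 1))

namespace RelativeCWComplexOld

/-- The inclusion of `sk n` into `sk (n+1)`. -/
noncomputable abbrev skInclusion {A : TopCat.{u}} (X : RelativeCWComplexOld A) (n : ℕ) :
    X.sk n ⟶ X.sk (n + 1) :=
  CategoryTheory.CategoryStruct.comp (CategoryTheory.Limits.pushout.inl _ _)
    (X.attachCells n).iso_pushout.inv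

/-- The underlying space: the colimit of the skeleta. -/
noncomputable abbrev toTopCat {A : TopCat.{u}} (X : RelativeCWComplexOld A) : TopCat.{u} :=
  CategoryTheory.Limits.colimit (CategoryTheory.Functor.ofSequence X.skInclusion)

end RelativeCWComplexOld

/-- A CW complex: a relative CW complex with empty `(-1)`-skeleton, as in the older Mathlib. -/
structure CWComplexOld extends RelativeCWComplexOld.{u} (TopCat.of PEmpty)

/-- The underlying topological space of a CW complex. -/
abbrev CWSpace (K : CWComplexOld.{u}) : Type u := K.toRelativeCWComplexOld.toTopCat

/-- A CW complex has dimension at most `m` if it has no cells of dimension `> m`. -/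
def CWDimLE (K : CWComplexOld.{u}) (m : ℕ) : Prop :=
  ∀ n : ℕ, m < n →
    IsEmpty (RelativeCWComplexOld.AttachGeneralizedCells.cells (K.toRelativeCWComplexOld.attachCells n))

/-- Hurewicz fibration: the homotopy lifting property with respect to all spaces. -/
def IsFibration {E B : Type u} [TopologicalSpace E] [TopologicalSpace B] (p : C(E, B)) : Prop :=
  ∀ (X : Type u) [TopologicalSpace X] (f : C(X, E)) (H : C(X × unitInterval, B)),
    (∀ x, H (x, 0) = p (f x)) →
    ∃ H' : C(X × unitInterval, E), (∀ z, p (H' z) = H z) ∧ (∀ x, H' (x, 0) = f x)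

/-- The inclusion of a subset as a continuous map. -/
def inclMap {X : Type u} [TopologicalSpace X] (U : Set X) : C(U, X) :=
  ⟨Subtype.val, continuous_subtype_val⟩

/-- Property `A_{m,p}`: every map into `U` from an `m`-dimensional CW complex lifts through `p`. -/
def LiftingProp {E B : Type u} [TopologicalSpace E] [TopologicalSpace B]
    (p : C(E, B)) (m : ℕ) (U : Set B) : Prop :=
  ∀ K : CWComplexOld.{u}, CWDimLE K m → ∀ φ : C(CWSpace K, U),
    ∃ s : C(CWSpace K, E), ∀ x, p (s x) = (φ x : B)

/-- The `m`-sectional category of `p`, valued in `ℕ∞` (`⊤` if no finite cover exists). -/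
noncomputable def secatm {E B : Type u} [TopologicalSpace E] [TopologicalSpace B]
    (p : C(E, B)) (m : ℕ) : ℕ∞ :=
  sInf ((fun n : ℕ => (n : ℕ∞)) ''
    {k : ℕ | ∃ U : Fin (k + 1) → Set B, (∀ i, IsOpen (U i)) ∧ (⋃ i, U i) = Set.univ ∧
      ∀ i, LiftingProp p m (U i)})

/-- The classical sectional category. -/
noncomputable def secat {E B : Type u} [TopologicalSpace E] [TopologicalSpace B]
    (p : C(E, B)) : ℕ∞ :=
  sInf ((fun n : ℕ => (n : ℕ∞)) ''
    {k : ℕ | ∃ U : Fin (k + 1) → Set B, (∀ i, IsOpen (U i)) ∧ (⋃ i, U i) = Set.univ ∧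
      ∀ i, ∃ s : C((U i : Set B), E), ∀ x, p (s x) = (x : B)})

/-- Property `B_m`. -/
def NullProp {X : Type u} [TopologicalSpace X] (m : ℕ) (U : Set X) : Prop :=
  ∀ K : CWComplexOld.{u}, CWDimLE K m → ∀ φ : C(CWSpace K, U),
    ((inclMap U).comp φ).Nullhomotopic

/-- The `m`-dimensional Lusternik–Schnirelmann category. -/
noncomputable def catm (X : Type u) [TopologicalSpace X] (m : ℕ) : ℕ∞ :=
  sInf ((fun n : ℕ => (n : ℕ∞)) ''
    {k : ℕ | ∃ U : Fin (k + 1) → Set X, (∀ i, IsOpen (U i)) ∧ (⋃ i, U i) = Set.univ ∧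
      ∀ i, NullProp m (U i)})

/-- Classical (normalized) LS category. -/
noncomputable def catLS (X : Type u) [TopologicalSpace X] : ℕ∞ :=
  sInf ((fun n : ℕ => (n : ℕ∞)) ''
    {k : ℕ | ∃ U : Fin (k + 1) → Set X, (∀ i, IsOpen (U i)) ∧ (⋃ i, U i) = Set.univ ∧
      ∀ i, (inclMap (U i)).Nullhomotopic})

/-- Property `C_{m,f}`. -/
def NullPropMap {X Y : Type u} [TopologicalSpace X] [TopologicalSpace Y]
    (f : C(X, Y)) (m : ℕ) (U : Set X) : Prop :=
  ∀ K : CWComplexOld.{u}, CWDimLE K m → ∀ φ : C(CWSpace K, U),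
    ((f.comp (inclMap U)).comp φ).Nullhomotopic

/-- The `m`-dimensional LS category of a map. -/
noncomputable def catmMap {X Y : Type u} [TopologicalSpace X] [TopologicalSpace Y]
    (f : C(X, Y)) (m : ℕ) : ℕ∞ :=
  sInf ((fun n : ℕ => (n : ℕ∞)) ''
    {k : ℕ | ∃ U : Fin (k + 1) → Set X, (∀ i, IsOpen (U i)) ∧ (⋃ i, U i) = Set.univ ∧
      ∀ i, NullPropMap f m (U i)})

/-- Property `D_{m,f,g}`. -/
def DistProp {X Y : Type u} [TopologicalSpace X] [TopologicalSpace Y]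
    (f g : C(X, Y)) (m : ℕ) (U : Set X) : Prop :=
  ∀ K : CWComplexOld.{u}, CWDimLE K m → ∀ φ : C(CWSpace K, U),
    ((f.comp (inclMap U)).comp φ).Homotopic ((g.comp (inclMap U)).comp φ)

/-- The `m`-homotopic distance. -/
noncomputable def homDistm {X Y : Type u} [TopologicalSpace X] [TopologicalSpace Y]
    (f g : C(X, Y)) (m : ℕ) : ℕ∞ :=
  sInf ((fun n : ℕ => (n : ℕ∞)) ''
    {k : ℕ | ∃ U : Fin (k + 1) → Set X, (∀ i, IsOpen (U i)) ∧ (⋃ i, U i) = Set.univ ∧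
      ∀ i, DistProp f g m (U i)})

open CategoryTheory CategoryTheory.Limits

section Colim
set_option linter.unusedSectionVars false
variable {C : Type*} [Category C] (F : ℕ ⥤ C) [HasColimit F] (n₀ : ℕ)

lemma isIso_map_of_le (h : ∀ n, n₀ ≤ n → IsIso (F.map (homOfLE (Nat.le_succ n))))
    {j : ℕ} (hj : n₀ ≤ j) : IsIso (F.map (homOfLE hj)) := by
  induction j with
  | zero =>
    obtain rfl : n₀ = 0 := Nat.le_zero.mp hj
    have : homOfLE hj = 𝟙 (0:ℕ) := rfl
    rw [this, F.map_id]; infer_instance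
  | succ k ih =>
    rcases Nat.lt_or_ge n₀ (k+1) with h1 | h2
    · have hk : n₀ ≤ k := Nat.lt_succ_iff.mp h1
      have : homOfLE hj = homOfLE hk ≫ homOfLE (Nat.le_succ k) := rfl
      rw [this, F.map_comp]
      have := ih hk
      have := h k hk
      infer_instance
    · obtain rfl : n₀ = k+1 := le_antisymm hj h2
      have : homOfLE hj = 𝟙 (k+1:ℕ) := rfl
      rw [this, F.map_id]; infer_instance

lemma isIso_map_of_le' (h : ∀ n, n₀ ≤ n → IsIso (F.map (homOfLE (Nat.le_succ n))))
    {a c : ℕ} (hna : n₀ ≤ a) (hac : a ≤ c) : IsIso (F.map (homOfLE hac)) := by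
  have h1 : IsIso (F.map (homOfLE hna)) := isIso_map_of_le F n₀ h hna
  have h2 : IsIso (F.map (homOfLE (le_trans hna hac))) := isIso_map_of_le F n₀ h (le_trans hna hac)
  have e : F.map (homOfLE hna) ≫ F.map (homOfLE hac) = F.map (homOfLE (le_trans hna hac)) := by
    rw [← F.map_comp]; rfl
  rw [← e] at h2
  exact IsIso.of_isIso_comp_left (F.map (homOfLE hna)) (F.map (homOfLE hac))

lemma stabHom_indep (h : ∀ n, n₀ ≤ n → IsIso (F.map (homOfLE (Nat.le_succ n))))
    {j a b : ℕ} (hja : j ≤ a) (hna : n₀ ≤ a) (hjb : j ≤ b) (hnb : n₀ ≤ b) :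
    F.map (homOfLE hja) ≫ @inv _ _ _ _ _ (isIso_map_of_le F n₀ h hna) =
    F.map (homOfLE hjb) ≫ @inv _ _ _ _ _ (isIso_map_of_le F n₀ h hnb) := by
  have key : ∀ {a c : ℕ} (hja : j ≤ a) (hna : n₀ ≤ a) (hac : a ≤ c),
      F.map (homOfLE hja) ≫ @inv _ _ _ _ _ (isIso_map_of_le F n₀ h hna) =
      F.map (homOfLE (le_trans hja hac)) ≫
        @inv _ _ _ _ _ (isIso_map_of_le F n₀ h (le_trans hna hac)) := by
    intro a c hja hna hac
    haveI h1 : IsIso (F.map (homOfLE hna)) := isIso_map_of_le F n₀ h hna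
    haveI h2 : IsIso (F.map (homOfLE (le_trans hna hac))) :=
      isIso_map_of_le F n₀ h (le_trans hna hac)
    haveI h3 : IsIso (F.map (homOfLE hac)) := isIso_map_of_le' F n₀ h hna hac
    have e1 : F.map (homOfLE (le_trans hja hac)) = F.map (homOfLE hja) ≫ F.map (homOfLE hac) := by
      rw [← F.map_comp]; rfl
    have e2 : F.map (homOfLE (le_trans hna hac)) = F.map (homOfLE hna) ≫ F.map (homOfLE hac) := by
      rw [← F.map_comp]; rfl
    rw [e1, Category.assoc]
    congr 1
    rw [IsIso.eq_comp_inv, e2, IsIso.inv_hom_id_assoc]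
  calc F.map (homOfLE hja) ≫ @inv _ _ _ _ _ (isIso_map_of_le F n₀ h hna)
      = F.map (homOfLE (le_trans hja (le_max_left a b))) ≫
        @inv _ _ _ _ _ (isIso_map_of_le F n₀ h (le_trans hna (le_max_left a b))) :=
        key hja hna (le_max_left a b)
    _ = F.map (homOfLE hjb) ≫ @inv _ _ _ _ _ (isIso_map_of_le F n₀ h hnb) := by
        have : (le_trans hja (le_max_left a b)) = (le_trans hjb (le_max_right a b)) := rfl
        rw [this]
        have : (le_trans hna (le_max_left a b)) = (le_trans hnb (le_max_right a b)) := rfl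
        rw [this]
        exact (key hjb hnb (le_max_right a b)).symm

/-- the cocone map `F.obj j ⟶ F.obj n₀` -/
noncomputable def stabHom (h : ∀ n, n₀ ≤ n → IsIso (F.map (homOfLE (Nat.le_succ n))))
    (j : ℕ) : F.obj j ⟶ F.obj n₀ :=
  F.map (homOfLE (le_max_left j n₀)) ≫
    @inv _ _ _ _ _ (isIso_map_of_le F n₀ h (le_max_right j n₀))

lemma stabHom_comp_ι (h : ∀ n, n₀ ≤ n → IsIso (F.map (homOfLE (Nat.le_succ n))))
    (j a : ℕ) (hja : j ≤ a) (hna : n₀ ≤ a) :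
    F.map (homOfLE hja) ≫ @inv _ _ _ _ _ (isIso_map_of_le F n₀ h hna) ≫ colimit.ι F n₀ =
      colimit.ι F j := by
  haveI h1 : IsIso (F.map (homOfLE hna)) := isIso_map_of_le F n₀ h hna
  have : @inv _ _ _ _ _ (isIso_map_of_le F n₀ h hna) ≫ colimit.ι F n₀ = colimit.ι F a := by
    rw [IsIso.inv_comp_eq]
    exact (colimit.w F (homOfLE hna)).symm
  rw [this]
  exact colimit.w F (homOfLE hja)

lemma isIso_colimit_ι_of_stab (h : ∀ n, n₀ ≤ n → IsIso (F.map (homOfLE (Nat.le_succ n)))) :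
    IsIso (colimit.ι F n₀) := by
  let c : Limits.Cocone F := ⟨F.obj n₀, ⟨stabHom F n₀ h, by
    intro i j f
    have hij : i ≤ j := leOfHom f
    have : f = homOfLE hij := rfl
    rw [this]
    simp only [Functor.const_obj_obj, Functor.const_obj_map, Category.comp_id]
    unfold stabHom
    rw [← Category.assoc, ← F.map_comp]
    exact stabHom_indep F n₀ h (le_trans hij (le_max_left j n₀))
      (le_max_right j n₀) (le_max_left i n₀) (le_max_right i n₀)⟩⟩
  refine ⟨colimit.desc F c, ?_, ?_⟩
  · have : colimit.ι F n₀ ≫ colimit.desc F c = c.ι.app n₀ := colimit.ι_desc c n₀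
    rw [this]
    show stabHom F n₀ h n₀ = 𝟙 _
    unfold stabHom
    rw [stabHom_indep F n₀ h (le_max_left n₀ n₀) (le_max_right n₀ n₀) le_rfl le_rfl]
    haveI : IsIso (F.map (homOfLE (le_rfl : n₀ ≤ n₀))) := isIso_map_of_le F n₀ h le_rfl
    exact IsIso.hom_inv_id _
  · apply colimit.hom_ext
    intro j
    rw [colimit.ι_desc_assoc, Category.comp_id]
    show stabHom F n₀ h j ≫ colimit.ι F n₀ = colimit.ι F j
    unfold stabHom
    rw [Category.assoc]
    exact stabHom_comp_ι F n₀ h j _ (le_max_left j n₀) (le_max_right j n₀)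
end Colim

open unitInterval Set

noncomputable section CubeDisk
variable (k : ℕ)

abbrev Euc := EuclideanSpace ℝ (Fin k)
abbrev DiskSet := Metric.closedBall (0 : Euc k) 1

lemma halfmem : (1:ℝ)/2 ∈ Set.Icc (0:ℝ) 1 := ⟨by norm_num, by norm_num⟩

def cubeVec (y : Fin k → I) : Fin k → ℝ := fun i => 2 * (y i : ℝ) - 1

lemma cubeVec_norm_le (y : Fin k → I) : ‖cubeVec k y‖ ≤ 1 := by
  apply pi_norm_le_iff_of_nonneg zero_le_one |>.mpr
  intro i
  simp only [cubeVec, Real.norm_eq_abs, abs_le]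
  constructor <;> nlinarith [(y i).2.1, (y i).2.2]

def toE : (Fin k → ℝ) ≃L[ℝ] Euc k := (EuclideanSpace.equiv (Fin k) ℝ).symm

def rad (v : Fin k → ℝ) : Euc k := (‖v‖ * ‖toE k v‖⁻¹) • toE k v

lemma rad_norm (v : Fin k → ℝ) : ‖rad k v‖ = ‖v‖ := by
  rcases eq_or_ne v 0 with rfl | hv
  · simp [rad]
  · have h1 : toE k v ≠ 0 := fun h => hv (((toE k).map_eq_zero_iff).mp h)
    have h2 : ‖toE k v‖ ≠ 0 := norm_ne_zero_iff.mpr h1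
    rw [rad, norm_smul, Real.norm_eq_abs,
      abs_of_nonneg (mul_nonneg (norm_nonneg _) (inv_nonneg.mpr (norm_nonneg _)))]
    field_simp

lemma rad_continuous : Continuous (rad k) := by
  rw [continuous_iff_continuousAt]
  intro v
  rcases eq_or_ne v 0 with rfl | hv
  · have h0 : rad k 0 = 0 := by simp [rad]
    rw [ContinuousAt, h0]
    refine squeeze_zero_norm (a := fun w => ‖w‖) (fun w => le_of_eq (rad_norm k w)) ?_
    exact continuous_norm.tendsto' 0 0 norm_zero
  · have h1 : toE k v ≠ 0 := fun h => hv (((toE k).map_eq_zero_iff).mp h)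
    have h2 : ‖toE k v‖ ≠ 0 := norm_ne_zero_iff.mpr h1
    exact ((continuous_norm.continuousAt.mul
      (((toE k).continuous.norm.continuousAt).inv₀ h2)).smul
      (toE k).continuous.continuousAt)

def cubeToDisk (y : Fin k → I) : DiskSet k :=
  ⟨rad k (cubeVec k y), by
    rw [mem_closedBall_zero_iff, rad_norm]; exact cubeVec_norm_le k y⟩

lemma cubeToDisk_continuous : Continuous (cubeToDisk k) := by
  apply Continuous.subtype_mk
  apply (rad_continuous k).comp
  apply continuous_pi
  intro i
  simp only [cubeVec]
  continuity

lemma cubeToDisk_norm (y : Fin k → I) : ‖(cubeToDisk k y : Euc k)‖ = ‖cubeVec k y‖ :=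
  rad_norm k _

def diskToCube (x : DiskSet k) : Fin k → I := fun i =>
  projIcc 0 1 zero_le_one
    ((((‖(x : Euc k)‖ * ‖(toE k).symm (x : Euc k)‖⁻¹) • (toE k).symm (x : Euc k)) i + 1) / 2)

lemma cd_left_inv : Function.LeftInverse (diskToCube k) (cubeToDisk k) := by
  intro y
  set v := cubeVec k y with hv
  have hx : (cubeToDisk k y : Euc k) = rad k v := rfl
  funext i
  rcases eq_or_ne v 0 with h0 | hne
  · have hy : (y i : ℝ) = 1/2 := by
      have := congrFun h0 i
      simp only [hv, cubeVec, Pi.zero_apply] at this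
      linarith
    have hx0 : (cubeToDisk k y : Euc k) = 0 := by rw [hx, h0]; simp [rad]
    simp only [diskToCube, hx0, map_zero, norm_zero, zero_mul, zero_smul, Pi.zero_apply]
    rw [show ((0:ℝ) + 1) / 2 = 1/2 by norm_num]
    rw [projIcc_of_mem zero_le_one (⟨by norm_num, by norm_num⟩)]
    exact Subtype.ext hy.symm
  · have he : toE k v ≠ 0 := fun h => hne (((toE k).map_eq_zero_iff).mp h)
    have hnv : ‖v‖ ≠ 0 := norm_ne_zero_iff.mpr hne
    have hnne : ‖toE k v‖ ≠ 0 := norm_ne_zero_iff.mpr he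
    have hw : (toE k).symm (rad k v) = (‖v‖ * ‖toE k v‖⁻¹) • v := by
      rw [rad, map_smul, (toE k).symm_apply_apply]
    have hnorm_w : ‖(‖v‖ * ‖toE k v‖⁻¹) • v‖ = ‖v‖ * ‖toE k v‖⁻¹ * ‖v‖ := by
      rw [norm_smul, Real.norm_eq_abs,
        abs_of_nonneg (mul_nonneg (norm_nonneg _) (inv_nonneg.mpr (norm_nonneg _)))]
    have hscal : (‖rad k v‖ * ‖(toE k).symm (rad k v)‖⁻¹) • ((toE k).symm (rad k v)) = v := by
      rw [hw, rad_norm, hnorm_w, smul_smul]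
      rw [show ‖v‖ * (‖v‖ * ‖toE k v‖⁻¹ * ‖v‖)⁻¹ * (‖v‖ * ‖toE k v‖⁻¹) = 1 by
        field_simp, one_smul]
    have hvi : (v i + 1)/2 = (y i : ℝ) := by simp only [hv, cubeVec]; ring
    simp only [diskToCube, hx, hscal, hvi]
    rw [projIcc_of_mem zero_le_one (y i).2]

lemma cd_right_inv : Function.RightInverse (diskToCube k) (cubeToDisk k) := by
  intro x
  apply Subtype.ext
  rcases eq_or_ne (x : Euc k) 0 with h0 | hne
  · have hd : diskToCube k x = fun _ => ⟨1/2, halfmem⟩ := by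
      funext i
      simp only [diskToCube, h0, map_zero, norm_zero, zero_mul, zero_smul, Pi.zero_apply]
      rw [show ((0:ℝ) + 1) / 2 = 1/2 by norm_num]
      exact projIcc_of_mem zero_le_one halfmem
    rw [hd, h0]
    have hc : cubeVec k (fun _ => (⟨1/2, halfmem⟩ : I)) = 0 := by
      funext i; simp only [cubeVec]; norm_num
    show rad k (cubeVec k fun _ => (⟨1/2, halfmem⟩ : I)) = 0
    rw [hc]; simp [rad]
  · set w := (toE k).symm (x : Euc k) with hwdef
    have hnx : ‖(x : Euc k)‖ ≠ 0 := norm_ne_zero_iff.mpr hne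
    have hwne : w ≠ 0 := by
      intro h
      apply hne
      have := congrArg (toE k) h
      rw [hwdef, (toE k).apply_symm_apply, map_zero] at this
      exact this
    have hnw : ‖w‖ ≠ 0 := norm_ne_zero_iff.mpr hwne
    set v := (‖(x : Euc k)‖ * ‖w‖⁻¹) • w with hvdef
    have hnormv : ‖v‖ = ‖(x : Euc k)‖ := by
      rw [hvdef, norm_smul, Real.norm_eq_abs,
        abs_of_nonneg (mul_nonneg (norm_nonneg _) (inv_nonneg.mpr (norm_nonneg _)))]
      field_simp
    have hvle : ∀ i, |v i| ≤ 1 := by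
      intro i
      have h1 : ‖v‖ ≤ 1 := by
        rw [hnormv]
        exact mem_closedBall_zero_iff.mp x.2
      calc |v i| = ‖v i‖ := rfl
        _ ≤ ‖v‖ := norm_le_pi_norm v i
        _ ≤ 1 := h1
    have hcube : cubeVec k (diskToCube k x) = v := by
      funext i
      simp only [cubeVec, diskToCube, ← hwdef, ← hvdef]
      rw [projIcc_of_mem zero_le_one (by
        rcases abs_le.mp (hvle i) with ⟨hl, hr⟩
        constructor <;> [linarith; linarith])]
      show 2 * ((v i + 1)/2) - 1 = v i
      ring
    show rad k (cubeVec k (diskToCube k x)) = (x : Euc k)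
    rw [hcube]
    have htoEv : toE k v = (‖(x : Euc k)‖ * ‖w‖⁻¹) • (x : Euc k) := by
      rw [hvdef, map_smul, (toE k).apply_symm_apply]
    have hnev : ‖toE k v‖ = ‖(x : Euc k)‖ * ‖w‖⁻¹ * ‖(x : Euc k)‖ := by
      rw [htoEv, norm_smul, Real.norm_eq_abs,
        abs_of_nonneg (mul_nonneg (norm_nonneg _) (inv_nonneg.mpr (norm_nonneg _)))]
    rw [rad, hnormv, hnev, htoEv, smul_smul]
    rw [show ‖(x : Euc k)‖ * (‖(x : Euc k)‖ * ‖w‖⁻¹ * ‖(x : Euc k)‖)⁻¹ * (‖(x : Euc k)‖ * ‖w‖⁻¹)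
        = 1 by field_simp, one_smul]

def cubeDiskHomeo : (Fin k → I) ≃ₜ DiskSet k := by
  have : Continuous (cubeToDisk k) := cubeToDisk_continuous k
  exact Continuous.homeoOfEquivCompactToT2
    (f := ⟨cubeToDisk k, diskToCube k, cd_left_inv k, cd_right_inv k⟩) this

lemma cubeDiskHomeo_boundary (y : Fin k → I) :
    ‖(cubeDiskHomeo k y : Euc k)‖ = 1 ↔ y ∈ Cube.boundary (Fin k) := by
  have hn : ‖(cubeDiskHomeo k y : Euc k)‖ = ‖cubeVec k y‖ := cubeToDisk_norm k y
  rw [hn]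
  constructor
  · intro h1
    by_contra hb
    have : ∀ i, ¬((y i) = 0 ∨ (y i) = 1) := by
      intro i hi
      exact hb ⟨i, hi⟩
    have hlt : ∀ i, ‖cubeVec k y i‖ < 1 := by
      intro i
      push_neg at this
      obtain ⟨h0, h1'⟩ := this i
      have hy0 : (0:ℝ) < y i := lt_of_le_of_ne (y i).2.1 (fun h => h0 (Subtype.ext h.symm))
      have hy1 : (y i : ℝ) < 1 := lt_of_le_of_ne (y i).2.2 (fun h => h1' (Subtype.ext h))
      simp only [cubeVec, Real.norm_eq_abs, abs_lt]
      constructor <;> linarith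
    have := pi_norm_lt_iff (zero_lt_one) |>.mpr hlt
    rw [h1] at this
    exact lt_irrefl 1 this
  · rintro ⟨i, hi⟩
    have h1 : ‖cubeVec k y i‖ = 1 := by
      rcases hi with h | h <;> simp [cubeVec, h, Real.norm_eq_abs] <;> norm_num
    refine le_antisymm (cubeVec_norm_le k y) ?_
    calc (1:ℝ) = ‖cubeVec k y i‖ := h1.symm
      _ ≤ ‖cubeVec k y‖ := norm_le_pi_norm _ i
end CubeDisk

open Topology unitInterval Set Metric

noncomputable section DiskLemmas
variable (k : ℕ)

abbrev DiskT := ULift.{u} (Metric.closedBall (0 : Euc k) 1)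
abbrev SphereT := ULift.{u} (Metric.sphere (0 : Euc k) 1)

/-- inclusion of the sphere into the disk -/
def sInc (s : SphereT.{u} k) : DiskT.{u} k :=
  ⟨⟨s.down.1, le_of_eq s.down.2⟩⟩

lemma sInc_norm (s : SphereT.{u} k) : ‖((sInc k s).down : Euc k)‖ = 1 := by
  have := s.down.2
  rwa [mem_sphere, dist_zero_right] at this

variable {B : Type u} [TopologicalSpace B]

def sigm : ℝ → I := Set.projIcc 0 1 zero_le_one

lemma sigm_of_mem {x : ℝ} (h : x ∈ Set.Icc (0:ℝ) 1) : (sigm x : ℝ) = x := by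
  rw [sigm, projIcc_of_mem zero_le_one h]

lemma sigm_coe (t : I) : sigm (t : ℝ) = t := by
  apply Subtype.ext
  exact sigm_of_mem t.2

lemma sigm_zero : sigm 0 = 0 := by
  apply Subtype.ext
  exact sigm_of_mem ⟨le_refl 0, zero_le_one⟩

lemma sigm_one : sigm 1 = 1 := by
  apply Subtype.ext
  exact sigm_of_mem ⟨zero_le_one, le_refl 1⟩

/-- clamped radial projection into the disk -/
def projD (y : Euc k) : DiskT.{u} k :=
  ⟨⟨(max 1 ‖y‖)⁻¹ • y, by
    rw [mem_closedBall_zero_iff, norm_smul, Real.norm_eq_abs,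
      abs_of_nonneg (inv_nonneg.mpr (le_trans zero_le_one (le_max_left 1 ‖y‖)))]
    rw [← div_eq_inv_mul]
    exact div_le_one_of_le₀ (le_max_right 1 ‖y‖)
      (le_of_lt (lt_of_lt_of_le zero_lt_one (le_max_left 1 ‖y‖)))⟩⟩

lemma projD_continuous : Continuous (projD.{u} k) := by
  apply continuous_uliftUp.comp
  apply Continuous.subtype_mk
  exact ((continuous_const.max continuous_norm).inv₀
    (fun y => ne_of_gt (lt_of_lt_of_le zero_lt_one (le_max_left 1 ‖y‖)))).smul continuous_id

lemma projD_of_norm_le {y : Euc k} (h : ‖y‖ ≤ 1) : ((projD.{u} k y).down : Euc k) = y := by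
  show (max 1 ‖y‖)⁻¹ • y = y
  rw [max_eq_left h, inv_one, one_smul]

lemma projD_of_norm_eq {y : Euc k} (h : ‖y‖ = 1) : ((projD.{u} k y).down : Euc k) = y :=
  projD_of_norm_le k (le_of_eq h)

/-- Extension of a map on the disk and a homotopy on the sphere to a homotopy on the disk. -/
lemma diskExt (w : C(DiskT.{u} k, B)) (Sd : C(SphereT.{u} k × I, B))
    (hc : ∀ s, Sd (s, 0) = w (sInc k s)) :
    ∃ W : C(DiskT.{u} k × I, B), (∀ d, W (d, 0) = w d) ∧
      (∀ s t, W (sInc k s, t) = Sd (s, t)) := by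
  classical
  set nrm : DiskT.{u} k → ℝ := fun d => ‖(d.down : Euc k)‖ with hnrm
  have nrm_cont : Continuous nrm := continuous_norm.comp
    (continuous_subtype_val.comp continuous_uliftDown)
  -- the side branch
  set sidef : DiskT.{u} k × I → B := fun q =>
    if h : (1:ℝ)/2 ≤ nrm q.1 then
      Sd (⟨⟨(nrm q.1)⁻¹ • (q.1.down : Euc k), by
        rw [mem_sphere, dist_zero_right, norm_smul, Real.norm_eq_abs,
          abs_of_nonneg (inv_nonneg.mpr (norm_nonneg _))]
        rw [inv_mul_cancel₀]
        exact ne_of_gt (lt_of_lt_of_le (by norm_num) h)⟩⟩,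
        sigm (2 - (2 - (q.2:ℝ))/(nrm q.1)))
    else w q.1 with hsidef
  set botf : DiskT.{u} k × I → B := fun q =>
    w (projD k ((2/(2 - (q.2:ℝ))) • (q.1.down : Euc k))) with hbotf
  have t_le : ∀ t : I, (t:ℝ) ≤ 1 := fun t => t.2.2
  have t_nonneg : ∀ t : I, (0:ℝ) ≤ t := fun t => t.2.1
  have denom_pos : ∀ t : I, (0:ℝ) < 2 - t := fun t => by have := t_le t; linarith
  -- continuity of the side branch on the region
  have side_cont : ContinuousOn sidef {q : DiskT.{u} k × I | 2 - (q.2:ℝ) ≤ 2 * nrm q.1} := by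
    rw [continuousOn_iff_continuous_restrict]
    set R := {q : DiskT.{u} k × I | 2 - (q.2:ℝ) ≤ 2 * nrm q.1} with hR
    have hhalf : ∀ q : R, (1:ℝ)/2 ≤ nrm q.1.1 := by
      intro q
      have h1 := q.2
      have h2 := denom_pos q.1.2
      simp only [hR, Set.mem_setOf_eq] at h1
      have := t_le q.1.2
      linarith
    have hres : R.domRestrict sidef = fun q : R =>
        Sd (⟨⟨(nrm q.1.1)⁻¹ • (q.1.1.down : Euc k), by
          rw [mem_sphere, dist_zero_right, norm_smul, Real.norm_eq_abs,
            abs_of_nonneg (inv_nonneg.mpr (norm_nonneg _))]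
          rw [inv_mul_cancel₀]
          exact ne_of_gt (lt_of_lt_of_le (by norm_num) (hhalf q))⟩⟩,
          sigm (2 - (2 - (q.1.2:ℝ))/(nrm q.1.1))) := by
      funext q
      show sidef q.1 = _
      rw [hsidef]
      simp only
      rw [dif_pos (hhalf q)]
    rw [hres]
    have hnrm_ne : ∀ q : R, nrm q.1.1 ≠ 0 :=
      fun q => ne_of_gt (lt_of_lt_of_le (by norm_num) (hhalf q))
    have c1 : Continuous fun q : R => nrm q.1.1 :=
      nrm_cont.comp (continuous_fst.comp continuous_subtype_val)
    apply Sd.continuous.comp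
    apply Continuous.prodMk
    · apply continuous_uliftUp.comp
      apply Continuous.subtype_mk
      exact (c1.inv₀ hnrm_ne).smul
        ((continuous_subtype_val.comp continuous_uliftDown).comp
          (continuous_fst.comp continuous_subtype_val))
    · apply (continuous_projIcc).comp
      apply Continuous.sub continuous_const
      apply Continuous.div
      · exact Continuous.sub continuous_const
          (continuous_subtype_val.comp (continuous_snd.comp continuous_subtype_val))
      · exact c1
      · exact hnrm_ne
  have bot_cont : Continuous botf := by
    apply w.continuous.comp
    apply (projD_continuous k).comp
    apply Continuous.fun_smul
    · apply Continuous.div continuous_const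
      · exact Continuous.sub continuous_const (continuous_subtype_val.comp continuous_snd)
      · intro q
        exact ne_of_gt (denom_pos q.2)
    · exact (continuous_subtype_val.comp continuous_uliftDown).comp continuous_fst
  -- agreement on the boundary between regions
  have agree : ∀ q : DiskT.{u} k × I, 2 - (q.2:ℝ) = 2 * nrm q.1 → sidef q = botf q := by
    rintro ⟨d, t⟩ heq
    have hpos : (0:ℝ) < 2 - t := denom_pos t
    have hnpos : (0:ℝ) < nrm d := by
      simp only at heq
      linarith
    have hhalf : (1:ℝ)/2 ≤ nrm d := by
      have := t_le t
      simp only at heq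
      linarith
    rw [hsidef, hbotf]
    simp only
    rw [dif_pos hhalf]
    have htime : 2 - (2 - (t:ℝ))/(nrm d) = 0 := by
      rw [heq]
      field_simp
      ring
    rw [htime, sigm_zero, hc]
    congr 1
    apply ULift.down_injective
    apply Subtype.ext
    show (nrm d)⁻¹ • (d.down : Euc k) = ((projD.{u} k ((2/(2 - (t:ℝ))) • (d.down : Euc k))).down : Euc k)
    have hsc : (2:ℝ)/(2 - (t:ℝ)) = (nrm d)⁻¹ := by
      rw [heq]
      rw [div_eq_iff (by positivity)]
      field_simp
    rw [hsc]
    rw [projD_of_norm_eq]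
    rw [norm_smul, Real.norm_eq_abs, abs_of_nonneg (inv_nonneg.mpr (norm_nonneg _))]
    rw [inv_mul_cancel₀ (ne_of_gt hnpos)]
  -- assemble
  set Wfun : DiskT.{u} k × I → B := fun q =>
    if 2 - (q.2:ℝ) ≤ 2 * nrm q.1 then sidef q else botf q with hWfun
  have Wcont : Continuous Wfun := by
    apply continuous_if_le
    · exact Continuous.sub continuous_const (continuous_subtype_val.comp continuous_snd)
    · exact continuous_const.mul (nrm_cont.comp continuous_fst)
    · exact side_cont
    · exact bot_cont.continuousOn
    · exact agree
  refine ⟨⟨Wfun, Wcont⟩, ?_, ?_⟩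
  · intro d
    show Wfun (d, 0) = w d
    rw [hWfun]
    simp only
    by_cases hcond : 2 - ((0:I):ℝ) ≤ 2 * nrm d
    · rw [if_pos hcond]
      have h0 : ((0:I):ℝ) = 0 := rfl
      have hn1 : nrm d = 1 := by
        have hle : nrm d ≤ 1 := by
          have := d.down.2
          rwa [mem_closedBall, dist_zero_right] at this
        rw [h0] at hcond
        linarith
      rw [hsidef]
      simp only
      rw [dif_pos (by rw [hn1]; norm_num)]
      have htime : 2 - (2 - ((0:I):ℝ))/(nrm d) = 0 := by
        rw [hn1, h0]; norm_num
      rw [htime, sigm_zero, hc]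
      congr 1
      apply ULift.down_injective
      apply Subtype.ext
      show (nrm d)⁻¹ • (d.down : Euc k) = (d.down : Euc k)
      rw [hn1, inv_one, one_smul]
    · rw [if_neg hcond, hbotf]
      simp only
      have h0 : ((0:I):ℝ) = 0 := rfl
      rw [h0]
      rw [show (2:ℝ)/(2-0) = 1 by norm_num, one_smul]
      congr 1
      apply ULift.down_injective
      apply Subtype.ext
      apply projD_of_norm_le
      have := d.down.2
      rwa [mem_closedBall, dist_zero_right] at this
  · intro s t
    show Wfun (sInc k s, t) = Sd (s, t)
    have hn1 : nrm (sInc k s) = 1 := sInc_norm k s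
    rw [hWfun]
    simp only
    rw [if_pos (by rw [hn1]; have := t_nonneg t; linarith)]
    rw [hsidef]
    simp only
    rw [dif_pos (by rw [hn1]; norm_num)]
    have htime : 2 - (2 - (t:ℝ))/(nrm (sInc k s)) = (t:ℝ) := by
      rw [hn1]; ring
    rw [htime, sigm_coe]
    congr 1
    refine Prod.ext ?_ rfl
    apply ULift.down_injective
    apply Subtype.ext
    show (nrm (sInc k s))⁻¹ • ((sInc k s).down : Euc k) = (s.down : Euc k)
    rw [hn1, inv_one, one_smul]
    rfl
end DiskLemmas

noncomputable section Obstruction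
universe v
open Topology unitInterval Set Metric
variable (k : ℕ) {B : Type v} [TopologicalSpace B]

/-- cube to ULift-disk homeomorphism -/
def cubeULiftDisk : (Fin k → I) ≃ₜ DiskT.{v} k :=
  (cubeDiskHomeo k).trans Homeomorph.ulift.symm

lemma cubeULiftDisk_boundary (y : Fin k → I) :
    ‖(((cubeULiftDisk.{v} k) y).down : Euc k)‖ = 1 ↔ y ∈ Cube.boundary (Fin k) := by
  have : (((cubeULiftDisk.{v} k) y).down : Euc k) = ((cubeDiskHomeo k y : Euc k)) := rfl
  rw [this]
  exact cubeDiskHomeo_boundary k y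

/-- Obstruction-theoretic nullhomotopy rel boundary: if `π_k(B, b₀)` is trivial, a map of the
disk which is constant on the boundary sphere is nullhomotopic rel the sphere. -/
lemma diskNull (b₀ : B) (hπ : Subsingleton (HomotopyGroup (Fin k) B b₀))
    (w₁ : C(DiskT.{v} k, B)) (hb : ∀ d : DiskT.{v} k, ‖(d.down : Euc k)‖ = 1 → w₁ d = b₀) :
    ∃ Δ : C(DiskT.{v} k × I, B), (∀ d, Δ (d, 0) = w₁ d) ∧ (∀ d, Δ (d, 1) = b₀) ∧
      (∀ d : DiskT.{v} k, ‖(d.down : Euc k)‖ = 1 → ∀ t, Δ (d, t) = b₀) := by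
  classical
  set e := cubeULiftDisk.{v} k with he
  set g : C(Fin k → I, B) := w₁.comp ⟨e, e.continuous⟩ with hg
  have gmem : g ∈ GenLoop (Fin k) B b₀ := by
    intro y hy
    apply hb
    exact (cubeULiftDisk_boundary.{v} k y).mpr hy
  set gl : GenLoop (Fin k) B b₀ := ⟨g, gmem⟩ with hgl
  have hq : (Quotient.mk _ gl : HomotopyGroup (Fin k) B b₀) =
      (Quotient.mk _ (GenLoop.const) : HomotopyGroup (Fin k) B b₀) :=
    @Subsingleton.elim _ hπ _ _
  have hhom : GenLoop.Homotopic gl GenLoop.const := Quotient.exact hq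
  obtain ⟨H⟩ := hhom
  refine ⟨⟨fun q => H (q.2, e.symm q.1), ?_⟩, ?_, ?_, ?_⟩
  · exact H.continuous.comp ((continuous_snd).prodMk (e.symm.continuous.comp continuous_fst))
  · intro d
    show H (0, e.symm d) = w₁ d
    rw [H.apply_zero]
    show w₁ (e (e.symm d)) = w₁ d
    rw [e.apply_symm_apply]
  · intro d
    show H (1, e.symm d) = b₀
    rw [H.apply_one]
    rfl
  · intro d hd t
    show H (t, e.symm d) = b₀
    have hy : e.symm d ∈ Cube.boundary (Fin k) := by
      apply (cubeULiftDisk_boundary.{v} k (e.symm d)).mp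
      have : e (e.symm d) = d := e.apply_symm_apply d
      rw [this]
      exact hd
    rw [H.eq_fst t hy]
    exact gmem _ hy

/-- The combined per-cell homotopy. -/
lemma cellHomotopy (b₀ : B) (hπ : Subsingleton (HomotopyGroup (Fin k) B b₀))
    (w : C(DiskT.{v} k, B)) (Sd : C(SphereT.{v} k × I, B))
    (hc : ∀ s, Sd (s, 0) = w (sInc k s)) (h1 : ∀ s, Sd (s, 1) = b₀) :
    ∃ V : C(DiskT.{v} k × I, B), (∀ d, V (d, 0) = w d) ∧ (∀ d, V (d, 1) = b₀) ∧
      (∀ s t, V (sInc k s, t) =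
        if (t:ℝ) ≤ 1/2 then Sd (s, sigm (2 * (t:ℝ))) else b₀) := by
  classical
  obtain ⟨W, hW0, hWside⟩ := diskExt k w Sd hc
  set w₁ : C(DiskT.{v} k, B) := ⟨fun d => W (d, 1), W.continuous.comp
    (continuous_id.prodMk continuous_const)⟩ with hw₁
  have hb : ∀ d : DiskT.{v} k, ‖(d.down : Euc k)‖ = 1 → w₁ d = b₀ := by
    intro d hd
    have hds : d = sInc k ⟨⟨(d.down : Euc k), by rwa [mem_sphere, dist_zero_right]⟩⟩ := by
      apply ULift.down_injective
      apply Subtype.ext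
      rfl
    show W (d, 1) = b₀
    rw [hds, hWside]
    exact h1 _
  obtain ⟨Δ, hΔ0, hΔ1, hΔb⟩ := diskNull k b₀ hπ w₁ hb
  set Vfun : DiskT.{v} k × I → B := fun q =>
    if (q.2:ℝ) ≤ 1/2 then W (q.1, sigm (2 * (q.2:ℝ))) else Δ (q.1, sigm (2 * (q.2:ℝ) - 1))
    with hVfun
  have Vcont : Continuous Vfun := by
    apply continuous_if_le
    · exact continuous_subtype_val.comp continuous_snd
    · exact continuous_const
    · apply Continuous.continuousOn
      apply W.continuous.comp
      apply continuous_fst.prodMk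
      exact continuous_projIcc.comp
        ((continuous_const.mul (continuous_subtype_val.comp continuous_snd)))
    · apply Continuous.continuousOn
      apply Δ.continuous.comp
      apply continuous_fst.prodMk
      exact continuous_projIcc.comp
        ((continuous_const.mul (continuous_subtype_val.comp continuous_snd)).sub
          continuous_const)
    · rintro ⟨d, t⟩ ht
      simp only at ht
      have h2t : 2 * (t:ℝ) = 1 := by rw [ht]; norm_num
      have h2t' : 2 * (t:ℝ) - 1 = 0 := by rw [h2t]; ring
      rw [show sigm (2 * (t:ℝ) - 1) = 0 by rw [h2t']; exact sigm_zero]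
      rw [show sigm (2 * (t:ℝ)) = 1 by rw [h2t]; exact sigm_one]
      rw [hΔ0]
      rfl
  refine ⟨⟨Vfun, Vcont⟩, ?_, ?_, ?_⟩
  · intro d
    show Vfun (d, 0) = w d
    rw [hVfun]
    simp only
    rw [if_pos (by show ((0:I):ℝ) ≤ 1/2; norm_num)]
    have : 2 * (((0:I)):ℝ) = 0 := by norm_num
    rw [this, sigm_zero]
    exact hW0 d
  · intro d
    show Vfun (d, 1) = b₀
    rw [hVfun]
    simp only
    rw [if_neg (by show ¬(((1:I)):ℝ) ≤ 1/2; norm_num)]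
    have : 2 * (((1:I)):ℝ) - 1 = 1 := by norm_num
    rw [this, sigm_one]
    exact hΔ1 d
  · intro s t
    show Vfun (sInc k s, t) = _
    rw [hVfun]
    simp only
    by_cases ht : (t:ℝ) ≤ 1/2
    · rw [if_pos ht, if_pos ht, hWside]
    · rw [if_neg ht, if_neg ht]
      exact hΔb _ (sInc_norm k s) _
end Obstruction

noncomputable section SkStep
set_option maxHeartbeats 2000000
open CategoryTheory CategoryTheory.Limits TopCat RelativeCWComplexOld unitInterval

variable {B : Type u} [TopologicalSpace B]

/-- repackage a continuous map as a TopCat hom -/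
def toHom {X : TopCat.{u}} (f : C(X, B)) : X ⟶ TopCat.of B := TopCat.ofHom f
def ofHom' {X : TopCat.{u}} (f : X ⟶ TopCat.of B) : C(X, B) := f.hom

/-- The doubled homotopy: run `G` (time-first homotopy) at double speed, then stay at `b₀`. -/
def doubled (b₀ : B) {X : TopCat.{u}} {f₀ : C(X, B)}
    (G : ContinuousMap.Homotopy f₀ (ContinuousMap.const X b₀)) : C(X × I, B) :=
  ⟨fun q => if (q.2 : ℝ) ≤ 1/2 then G (sigm (2 * (q.2:ℝ)), q.1) else b₀, by
    apply continuous_if_le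
    · exact continuous_subtype_val.comp continuous_snd
    · exact continuous_const
    · apply Continuous.continuousOn
      apply G.continuous.comp
      apply Continuous.prodMk
      · exact continuous_projIcc.comp
          (continuous_const.mul (continuous_subtype_val.comp continuous_snd))
      · exact continuous_fst
    · exact continuousOn_const
    · intro q hq
      have h2t : sigm (2 * (q.2:ℝ)) = 1 := by
        rw [show 2 * (q.2:ℝ) = 1 by rw [hq]; norm_num]
        exact sigm_one
      rw [h2t, G.apply_one]
      rfl⟩

lemma doubled_zero (b₀ : B) {X : TopCat.{u}} {f₀ : C(X, B)}
    (G : ContinuousMap.Homotopy f₀ (ContinuousMap.const X b₀)) (x : X) :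
    doubled b₀ G (x, 0) = f₀ x := by
  show (if ((0:I) : ℝ) ≤ 1/2 then G (sigm (2 * ((0:I):ℝ)), x) else b₀) = f₀ x
  rw [if_pos (by norm_num : ((0:I):ℝ) ≤ 1/2)]
  rw [show (2 : ℝ) * ((0:I):ℝ) = 0 by norm_num, sigm_zero, G.apply_zero]

lemma doubled_one (b₀ : B) {X : TopCat.{u}} {f₀ : C(X, B)}
    (G : ContinuousMap.Homotopy f₀ (ContinuousMap.const X b₀)) (x : X) :
    doubled b₀ G (x, 1) = b₀ := by
  show (if ((1:I) : ℝ) ≤ 1/2 then G (sigm (2 * ((1:I):ℝ)), x) else b₀) = b₀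
  rw [if_neg (by norm_num : ¬((1:I):ℝ) ≤ 1/2)]

/-- evaluation morphisms -/
def toHom2 {X : Type u} [TopologicalSpace X] (f : C(X, B)) : TopCat.of X ⟶ TopCat.of B := TopCat.ofHom f

def evAt (t : I) : TopCat.of C(I, B) ⟶ TopCat.of B :=
  toHom2 ⟨fun φ => φ t, continuous_eval_const t⟩

/-- The inductive step: a map on the `n`-skeleton which is homotopic to a constant extends
to a homotopy to the constant on the `(n+1)`-skeleton. -/
lemma skStep (K : CWComplexOld.{u}) (n : ℕ) (b₀ : B)
    (hπ : Subsingleton (HomotopyGroup (Fin (((n:ℤ) - 1 + 1).toNat)) B b₀))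
    (IH : ∀ f₀ : C(K.sk n, B), f₀.Homotopic (ContinuousMap.const _ b₀))
    (f : C(K.sk (n+1), B)) : f.Homotopic (ContinuousMap.const _ b₀) := by
  classical
  set k' : ℕ := ((n:ℤ) - 1 + 1).toNat with hk'
  set att : RelativeCWComplexOld.AttachGeneralizedCells (RelativeCWComplexOld.sphereInclusion.{u} ((n:ℤ) - 1)) (K.sk n) (K.sk (n+1)) := K.toRelativeCWComplexOld.attachCells n with hatt
  set z : ℤ := (n:ℤ) - 1 with hz
  set a : (∐ fun _ : att.cells => RelativeCWComplexOld.sphere.{u} z) ⟶ K.sk n := Limits.Sigma.desc att.attachMaps with ha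
  set iP : (∐ fun _ : att.cells => RelativeCWComplexOld.sphere.{u} z) ⟶ (∐ fun _ : att.cells => RelativeCWComplexOld.disk.{u} (z+1)) :=
    Limits.Sigma.map fun _ => sphereInclusion z with hiP
  set P := pushout a iP with hP
  set e : K.sk (n+1) ≅ P := att.iso_pushout with he
  set ghat : P ⟶ TopCat.of B := e.inv ≫ toHom f with hghat
  set f₀ : C(K.sk n, B) := ofHom' (pushout.inl a iP ≫ ghat) with hf₀
  obtain ⟨G⟩ := IH f₀
  -- the X-side leg
  set legX : K.sk n ⟶ TopCat.of C(I, B) :=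
    toHom (ContinuousMap.curry (doubled b₀ G)) with hlegX
  -- per-cell data
  have sphinc_eq : ∀ s : (RelativeCWComplexOld.sphere.{u} z : TopCat.{u}), sphereInclusion z s = sInc k' s := by
    intro s
    rfl
  set wc : att.cells → C(DiskT.{u} k', B) :=
    fun c => ofHom' (Limits.Sigma.ι (fun _ : att.cells => RelativeCWComplexOld.disk.{u} (z+1)) c ≫ pushout.inr a iP ≫ ghat)
    with hwc
  set Sdc : att.cells → C(SphereT.{u} k' × I, B) := fun c =>
    ⟨fun q => G (q.2, (att.attachMaps c) q.1),
      G.continuous.comp (continuous_snd.prodMk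
        ((att.attachMaps c).hom.continuous.comp continuous_fst))⟩ with hSdc
  have hcompat : ∀ c (s : (RelativeCWComplexOld.sphere.{u} z : TopCat.{u})),
      a (Limits.Sigma.ι (fun _ : att.cells => RelativeCWComplexOld.sphere.{u} z) c s) = (att.attachMaps c) s := by
    intro c s
    have := Limits.Sigma.ι_desc (f := fun _ : att.cells => RelativeCWComplexOld.sphere.{u} z) att.attachMaps c
    exact CategoryTheory.ConcreteCategory.congr_hom this s
  have hiPval : ∀ c (s : (RelativeCWComplexOld.sphere.{u} z : TopCat.{u})),
      iP (Limits.Sigma.ι (fun _ : att.cells => RelativeCWComplexOld.sphere.{u} z) c s) =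
        Limits.Sigma.ι (fun _ : att.cells => RelativeCWComplexOld.disk.{u} (z+1)) c (sphereInclusion z s) := by
    intro c s
    have : Limits.Sigma.ι (fun _ : att.cells => RelativeCWComplexOld.sphere.{u} z) c ≫ iP =
        sphereInclusion z ≫ Limits.Sigma.ι (fun _ : att.cells => RelativeCWComplexOld.disk.{u} (z+1)) c := by
      rw [hiP]
      exact ι_colimMap _ _
    exact CategoryTheory.ConcreteCategory.congr_hom this s
  have hpush : ∀ c (s : (RelativeCWComplexOld.sphere.{u} z : TopCat.{u})),
      pushout.inl a iP (a (Limits.Sigma.ι (fun _ : att.cells => RelativeCWComplexOld.sphere.{u} z) c s)) =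
        pushout.inr a iP (iP (Limits.Sigma.ι (fun _ : att.cells => RelativeCWComplexOld.sphere.{u} z) c s)) := by
    intro c s
    exact CategoryTheory.ConcreteCategory.congr_hom (pushout.condition (f := a) (g := iP))
      (Limits.Sigma.ι (fun _ : att.cells => RelativeCWComplexOld.sphere.{u} z) c s)
  have hc : ∀ c s, Sdc c (s, 0) = wc c (sInc k' s) := by
    intro c s
    show G (0, (att.attachMaps c) s) = _
    rw [G.apply_zero]
    show f₀ ((att.attachMaps c) s) = ghat (pushout.inr a iP
      (Limits.Sigma.ι (fun _ : att.cells => RelativeCWComplexOld.disk.{u} (z+1)) c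
        (sphereInclusion z (s : RelativeCWComplexOld.sphere.{u} z))))
    have key := congrArg (fun x => ghat x) (hpush c s)
    rw [hcompat c s, hiPval c s] at key
    exact key
  have h1 : ∀ c s, Sdc c (s, 1) = b₀ := by
    intro c s
    show G (1, (att.attachMaps c) s) = b₀
    rw [G.apply_one]
    rfl
  -- the per-cell homotopies
  choose V hV0 hV1 hVside using fun c => cellHomotopy k' b₀ hπ (wc c) (Sdc c) (hc c) (h1 c)
  set legD : (∐ fun _ : att.cells => RelativeCWComplexOld.disk.{u} (z+1)) ⟶ TopCat.of C(I, B) :=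
    Limits.Sigma.desc (fun c => toHom (ContinuousMap.curry (V c))) with hlegD
  have hcomm : a ≫ legX = iP ≫ legD := by
    apply Limits.Sigma.hom_ext
    intro c
    rw [ha, hiP]
    rw [← Category.assoc, ← Category.assoc]
    rw [Limits.Sigma.ι_desc]
    rw [Limits.Sigma.ι_map]
    rw [Category.assoc, hlegD, Limits.Sigma.ι_desc]
    apply TopCat.ext
    intro s
    show ContinuousMap.curry (doubled b₀ G) ((att.attachMaps c) s) =
      ContinuousMap.curry (V c) (sphereInclusion z s)
    apply ContinuousMap.ext
    intro t
    show doubled b₀ G ((att.attachMaps c) s, t) = V c (sphereInclusion z s, t)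
    rw [sphinc_eq, hVside c s t]
    rfl
  set Hhat : P ⟶ TopCat.of C(I, B) := pushout.desc legX legD hcomm with hHhat
  -- endpoint identities
  have claim0 : Hhat ≫ evAt 0 = ghat := by
    apply pushout.hom_ext
    · rw [← Category.assoc, hHhat, pushout.inl_desc]
      apply TopCat.ext
      intro x
      show doubled b₀ G (x, 0) = ghat (pushout.inl a iP x)
      rw [doubled_zero]
      rfl
    · rw [← Category.assoc, hHhat, pushout.inr_desc]
      apply Limits.Sigma.hom_ext
      intro c
      rw [← Category.assoc, hlegD, Limits.Sigma.ι_desc]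
      apply TopCat.ext
      intro d
      show V c (d, 0) = ghat (pushout.inr a iP (Limits.Sigma.ι (fun _ : att.cells => RelativeCWComplexOld.disk.{u} (z+1)) c d))
      rw [hV0 c d]
      rfl
  have claim1 : Hhat ≫ evAt 1 = toHom (ContinuousMap.const P b₀) := by
    apply pushout.hom_ext
    · rw [← Category.assoc, hHhat, pushout.inl_desc]
      apply TopCat.ext
      intro x
      show doubled b₀ G (x, 1) = b₀
      rw [doubled_one]
    · rw [← Category.assoc, hHhat, pushout.inr_desc]
      apply Limits.Sigma.hom_ext
      intro c
      rw [← Category.assoc, hlegD, Limits.Sigma.ι_desc]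
      apply TopCat.ext
      intro d
      show V c (d, 1) = b₀
      rw [hV1 c d]
  -- the homotopy on P
  set gC : C(P, B) := ofHom' ghat with hgC
  have hPhomotopic : gC.Homotopic (ContinuousMap.const P b₀) := by
    refine ⟨⟨⟨fun q => (ContinuousMap.uncurry (ofHom' (B := C(I,B)) Hhat)) (q.2, q.1), ?_⟩,
      ?_, ?_⟩⟩
    · exact (ContinuousMap.uncurry (ofHom' (B := C(I,B)) Hhat)).continuous.comp
        (continuous_snd.prodMk continuous_fst)
    · intro x
      exact CategoryTheory.ConcreteCategory.congr_hom claim0 x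
    · intro x
      exact CategoryTheory.ConcreteCategory.congr_hom claim1 x
  -- transfer along the iso e
  have hfeq : gC.comp (ofHom' (B := P) e.hom) = f := by
    apply ContinuousMap.ext
    intro x
    show ghat (e.hom x) = f x
    rw [hghat]
    show toHom f (e.inv (e.hom x)) = f x
    rw [TopCat.hom_inv_id_apply]
    rfl
  have := ContinuousMap.Homotopic.comp
    hPhomotopic (ContinuousMap.Homotopic.refl (ofHom' (B := P) e.hom))
  rw [hfeq] at this
  convert this using 1
  ext x; rfl

section TopLevel
set_option maxHeartbeats 2000000
open CategoryTheory CategoryTheory.Limits TopCat RelativeCWComplexOld unitInterval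

variable {B : Type u} [TopologicalSpace B]

/-- maps from an empty space are homotopic -/
lemma homotopic_of_isEmpty {X : Type u} [TopologicalSpace X] [IsEmpty X]
    (f g : C(X, B)) : f.Homotopic g := by
  refine ⟨⟨⟨fun q => isEmptyElim q.2, ?_⟩, fun x => isEmptyElim x, fun x => isEmptyElim x⟩⟩
  rw [continuous_iff_continuousAt]
  intro q
  exact isEmptyElim q.2

/-- attaching an empty family of cells is an isomorphism -/
lemma isIso_inclusion_of_isEmpty {S D : TopCat.{u}} (f : S ⟶ D) (X X' : TopCat.{u})
    (att : RelativeCWComplexOld.AttachGeneralizedCells f X X') (h : IsEmpty att.cells) :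
    IsIso (pushout.inl _ _ ≫ att.iso_pushout.inv) := by
  set a := Limits.Sigma.desc att.attachMaps with ha
  set iP : (∐ fun _ : att.cells => S) ⟶ (∐ fun _ : att.cells => D) :=
    Limits.Sigma.map fun _ => f with hiP
  have : IsIso (pushout.inl a iP) := by
    refine ⟨pushout.desc (𝟙 X) (Limits.Sigma.desc (fun c => h.elim c)) ?_, ?_, ?_⟩
    · apply Limits.Sigma.hom_ext
      intro c
      exact h.elim c
    · exact pushout.inl_desc _ _ _
    · apply pushout.hom_ext
      · rw [← Category.assoc, pushout.inl_desc, Category.id_comp, Category.comp_id]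
      · simp only [Category.comp_id]
        rw [← Category.assoc, pushout.inr_desc]
        apply Limits.Sigma.hom_ext
        intro c
        exact h.elim c
  infer_instance

/-- the skeleton inclusion into a CW complex of dimension at most `m` is an iso from
level `m+1` on -/
lemma isIso_colim_ι (K : CWComplexOld.{u}) (m : ℕ)
    (hdim : ∀ j : ℕ, m < j → IsEmpty (RelativeCWComplexOld.AttachGeneralizedCells.cells
      (K.toRelativeCWComplexOld.attachCells j))) :
    IsIso (Limits.colimit.ι
      (Functor.ofSequence K.toRelativeCWComplexOld.skInclusion) (m+1)) := by
  apply isIso_colimit_ι_of_stab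
  intro j hj
  rw [Functor.ofSequence_map_homOfLE_succ]
  exact isIso_inclusion_of_isEmpty _ _ _ _ (hdim j (by omega))

/-- maps from a CW complex of dimension at most `m` into a space whose homotopy groups
at `b₀` vanish up to level `m` are homotopic to the constant map -/
lemma cwHomotopicConst (K : CWComplexOld.{u}) (m : ℕ)
    (hdim : ∀ j : ℕ, m < j → IsEmpty (RelativeCWComplexOld.AttachGeneralizedCells.cells
      (K.toRelativeCWComplexOld.attachCells j)))
    (b₀ : B) (hconn : ∀ j : ℕ, j ≤ m → Subsingleton (HomotopyGroup (Fin j) B b₀))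
    (f : C(K.toRelativeCWComplexOld.toTopCat, B)) :
    f.Homotopic (ContinuousMap.const _ b₀) := by
  -- homotopies on all skeletons
  have hsk : ∀ n : ℕ, n ≤ m + 1 → ∀ g : C(K.sk n, B),
      g.Homotopic (ContinuousMap.const _ b₀) := by
    intro n
    induction n with
    | zero =>
      intro _ g
      haveI : IsEmpty (K.sk 0) := ⟨fun x => PEmpty.elim (K.isoSkZero.inv x)⟩
      exact homotopic_of_isEmpty g _
    | succ n IHn =>
      intro hn g
      have hπ : Subsingleton (HomotopyGroup (Fin (((n:ℤ) - 1 + 1).toNat)) B b₀) := by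
        rw [show ((n:ℤ) - 1 + 1).toNat = n by omega]
        exact hconn n (by omega)
      exact skStep K n b₀ hπ (IHn (by omega)) g
  haveI hiso := isIso_colim_ι K m hdim
  set F := Functor.ofSequence K.toRelativeCWComplexOld.skInclusion with hF
  set e : K.sk (m+1) ≅ K.toRelativeCWComplexOld.toTopCat := @asIso _ _ _ _ (Limits.colimit.ι F (m+1)) hiso
    with he
  set f₀ : C(K.sk (m+1), B) := ofHom' (e.hom ≫ toHom f) with hf₀
  obtain ⟨G⟩ := hsk (m+1) le_rfl f₀
  have hfeq : f₀.comp (ofHom' (B := K.sk (m+1)) e.inv) = f := by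
    apply ContinuousMap.ext
    intro x
    show toHom f (e.hom (e.inv x)) = f x
    rw [TopCat.inv_hom_id_apply]
    rfl
  have := ContinuousMap.Homotopic.comp
    ⟨G⟩ (ContinuousMap.Homotopic.refl (ofHom' (B := K.sk (m+1)) e.inv))
  rw [hfeq] at this
  convert this using 1
  ext x; rfl
end TopLevel

section Final
set_option maxHeartbeats 1000000
open unitInterval

variable {E B : Type u} [TopologicalSpace E] [TopologicalSpace B]

/-- A nullhomotopic map lifts through a surjective fibration. -/
lemma lift_of_nullhomotopic (p : C(E, B)) (hp : IsFibration p)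
    (hsurj : Function.Surjective p) {X : Type u} [TopologicalSpace X]
    (f : C(X, B)) (hf : f.Nullhomotopic) : ∃ s : C(X, E), ∀ x, p (s x) = f x := by
  obtain ⟨y, ⟨H⟩⟩ := hf
  obtain ⟨e₀, he₀⟩ := hsurj y
  set Hsym := H.symm with hHsym
  set Hs : C(X × I, B) := ⟨fun q => Hsym (q.2, q.1),
    Hsym.continuous.comp (continuous_snd.prodMk continuous_fst)⟩ with hHs
  obtain ⟨H', hH'p, hH'0⟩ := hp X (ContinuousMap.const X e₀) Hs (fun x => by
    show Hsym (0, x) = p e₀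
    rw [Hsym.apply_zero, he₀]
    rfl)
  refine ⟨⟨fun x => H' (x, 1), H'.continuous.comp (continuous_id.prodMk continuous_const)⟩,
    fun x => ?_⟩
  show p (H' (x, 1)) = f x
  rw [hH'p (x, 1)]
  show Hsym (1, x) = f x
  rw [Hsym.apply_one]

lemma liftingProp_of_nullProp (p : C(E, B)) (hp : IsFibration p)
    (hsurj : Function.Surjective p) (m : ℕ) (U : Set B) (h : NullProp m U) :
    LiftingProp p m U := by
  intro K hK φ
  obtain ⟨s, hs⟩ := lift_of_nullhomotopic p hp hsurj ((inclMap U).comp φ) (h K hK φ)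
  exact ⟨s, fun x => hs x⟩

lemma nullProp_of_liftingProp (p : C(E, B)) (hE : ContractibleSpace E)
    (m : ℕ) (U : Set B) (h : LiftingProp p m U) : NullProp m U := by
  intro K hK φ
  obtain ⟨s, hs⟩ := h K hK φ
  obtain ⟨e0, hhom⟩ := id_nullhomotopic E
  have hsnull : s.Homotopic (ContinuousMap.const _ e0) := by
    have := ContinuousMap.Homotopic.comp hhom (ContinuousMap.Homotopic.refl s)
    rwa [ContinuousMap.id_comp, ContinuousMap.const_comp] at this
  have h2 := ContinuousMap.Homotopic.comp (ContinuousMap.Homotopic.refl p) hsnull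
  have hps : p.comp s = (inclMap U).comp φ := ContinuousMap.ext hs
  have hpc : p.comp (ContinuousMap.const _ e0) =
      ContinuousMap.const (CWSpace K) (p e0) := rfl
  rw [hps, hpc] at h2
  exact ⟨p e0, h2⟩

lemma secatm_le_catm (p : C(E, B)) (hp : IsFibration p) (hsurj : Function.Surjective p)
    (m : ℕ) : secatm p m ≤ catm B m := by
  apply sInf_le_sInf
  apply Set.image_mono
  rintro kk ⟨U, hU1, hU2, hU3⟩
  exact ⟨U, hU1, hU2, fun i => liftingProp_of_nullProp p hp hsurj m (U i) (hU3 i)⟩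

lemma catm_le_secatm (p : C(E, B)) (hE : ContractibleSpace E) (m : ℕ) :
    catm B m ≤ secatm p m := by
  apply sInf_le_sInf
  apply Set.image_mono
  rintro kk ⟨U, hU1, hU2, hU3⟩
  exact ⟨U, hU1, hU2, fun i => nullProp_of_liftingProp p hE m (U i) (hU3 i)⟩

lemma secatm_eq_zero (p : C(E, B)) (hp : IsFibration p) (hsurj : Function.Surjective p)
    (m r : ℕ) (hconn : ∀ k ≤ r, ∀ b : B, Subsingleton (HomotopyGroup (Fin k) B b))
    (hmr : m ≤ r) : secatm p m = 0 := by
  have hlift : LiftingProp p m (Set.univ : Set B) := by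
    intro K hK φ
    rcases isEmpty_or_nonempty (CWSpace K) with hKe | hKne
    · refine ⟨⟨fun x => isEmptyElim x, ?_⟩, fun x => isEmptyElim x⟩
      rw [continuous_iff_continuousAt]
      intro x
      exact isEmptyElim x
    · set f : C(CWSpace K, B) := (inclMap Set.univ).comp φ with hf
      set b₀ : B := f (Classical.choice hKne) with hb₀
      have hnull : f.Nullhomotopic :=
        ⟨b₀, cwHomotopicConst K m hK b₀ (fun j hj => hconn j (le_trans hj hmr) b₀) f⟩
      obtain ⟨s, hs⟩ := lift_of_nullhomotopic p hp hsurj f hnull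
      exact ⟨s, fun x => hs x⟩
  have h0 : (0 : ℕ∞) ∈ ((fun n : ℕ => (n : ℕ∞)) ''
      {k : ℕ | ∃ U : Fin (k + 1) → Set B, (∀ i, IsOpen (U i)) ∧ (⋃ i, U i) = Set.univ ∧
        ∀ i, LiftingProp p m (U i)}) := by
    refine ⟨0, ⟨fun _ => Set.univ, fun _ => isOpen_univ, ?_, fun _ => hlift⟩, ?_⟩
    · exact Set.iUnion_const _
    · simp
  exact le_antisymm (sInf_le h0) zero_le

theorem stmt8' {E B : Type u} [TopologicalSpace E] [TopologicalSpace B]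
    (p : C(E, B)) (hp : IsFibration p) (hsurj : Function.Surjective p) (m : ℕ) :
    secatm p m ≤ catm B m ∧
    (∀ r : ℕ, (∀ k ≤ r, ∀ b : B, Subsingleton (HomotopyGroup (Fin k) B b)) →
      m ≤ r → secatm p m = 0) ∧
    (ContractibleSpace E → secatm p m = catm B m) := by
  refine ⟨secatm_le_catm p hp hsurj m, ?_, ?_⟩
  · intro r hconn hmr
    exact secatm_eq_zero p hp hsurj m r hconn hmr
  · intro hE
    exact le_antisymm (secatm_le_catm p hp hsurj m) (catm_le_secatm p hE m)
end Final


/-- For a surjective fibration, `secat_m(p) ≤ cat_m(B)`; it vanishes for `m ≤ r` if `B` is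
`r`-connected, and equals `cat_m(B)` if `E` is contractible. -/
theorem stmt8 {E B : Type u} [TopologicalSpace E] [TopologicalSpace B]
    (p : C(E, B)) (hp : IsFibration p) (hsurj : Function.Surjective p) (m : ℕ) :
    secatm p m ≤ catm B m ∧
    (∀ r : ℕ, (∀ k ≤ r, ∀ b : B, Subsingleton (HomotopyGroup (Fin k) B b)) →
      m ≤ r → secatm p m = 0) ∧
    (ContractibleSpace E → secatm p m = catm B m) := by
  exact stmt8' p hp hsurj m
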